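/- arXiv:1606.01510 — 3 statements merged into one kernel-verified Lean document; each statement's English description precedes it below -/
import Mathlib

section
/- Any solution (U^n) of the midpoint full discretization U^{n+1} - U^n = i(τ/h²) A U^{n+1/2} + iλτ F(U^{n+1/2}) U^{n+1/2} + i Z(U^{n+1/2}) δ_{n+1}β with U^0 on the unit sphere of ℂ^M satisfies the discrete charge conservation law ‖U^{n+1}‖ = ‖U^n‖ = 1 for all n, where U^{n+1/2} = (U^{n+1}+U^n)/2. -/
open Complex Finset

/-- Discrete charge conservation law for the midpoint full discretization
`U^{n+1} - Uⁿ = i(τ/h²) A U^{n+1/2} + iλτ F(U^{n+1/2}) U^{n+1/2} + i Z(U^{n+1/2}) δ_{n+1}β`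
with `U⁰` on the unit sphere of `ℂ^M`: every solution satisfies `‖Uⁿ‖ = 1` for all `n`,
where `U^{n+1/2} = (U^{n+1}+Uⁿ)/2`, `F(V) = diag(|v₁|²,…)` and `Z(V) = diag(v₁,…,v_M) E Λ`. -/
theorem stmt5 (M K : ℕ) (τ h lam : ℝ) (hτ : 0 < τ) (hh : 0 < h)
    (hlam : lam = 1 ∨ lam = -1)
    (A : Matrix (Fin M) (Fin M) ℝ) (hA : A.IsSymm)
    (E : Matrix (Fin M) (Fin K) ℝ) (Λ : Fin K → ℝ)
    (U : ℕ → Fin M → ℂ) (δβ : ℕ → Fin K → ℝ)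
    (h0 : ∑ m, ‖U 0 m‖ ^ 2 = 1)
    (hscheme : ∀ n : ℕ, ∀ m : Fin M,
      U (n + 1) m - U n m
        = Complex.I * ((τ / h ^ 2 : ℝ) : ℂ)
              * ((A.map Complex.ofReal).mulVec (fun j => (U (n + 1) j + U n j) / 2) m)
          + Complex.I * (lam : ℂ) * (τ : ℂ)
              * (‖(U (n + 1) m + U n m) / 2‖ : ℂ) ^ 2
              * ((U (n + 1) m + U n m) / 2)
          + Complex.I * ∑ k, ((U (n + 1) m + U n m) / 2) * (E m k : ℂ) * (Λ k : ℂ)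
              * (δβ (n + 1) k : ℂ)) :
    ∀ n : ℕ, ∑ m, ‖U n m‖ ^ 2 = 1 := by
  have step : ∀ n, ∑ m, ‖U (n+1) m‖ ^ 2 = ∑ m, ‖U n m‖ ^ 2 := by
    intro n
    set a := U (n+1) with ha
    set b := U n with hb
    set V : Fin M → ℂ := fun m => (a m + b m) / 2 with hVdef
    set s : Fin M → ℂ := fun m =>
      ((τ / h ^ 2 : ℝ) : ℂ) * ((A.map Complex.ofReal).mulVec V m)
      + (lam : ℂ) * (τ : ℂ) * (‖V m‖ : ℂ) ^ 2 * V m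
      + ∑ k, V m * (E m k : ℂ) * (Λ k : ℂ) * (δβ (n + 1) k : ℂ) with hsdef
    have hstep : ∀ m, a m - b m = Complex.I * s m := by
      intro m
      have hs := hscheme n m
      simp only [hsdef, ← ha, ← hb, ← hVdef] at hs ⊢
      rw [hs]; ring
    have hmv2 : ∀ m, (A.map Complex.ofReal).mulVec V m = ∑ j, (A m j : ℂ) * V j := by
      intro m
      simp [Matrix.mulVec, dotProduct, Matrix.map_apply]
    set Q : ℂ := ∑ m, ((A.map Complex.ofReal).mulVec V m) * (starRingEnd ℂ) (V m) with hQdef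
    have hQ : (starRingEnd ℂ) Q = Q := by
      calc (starRingEnd ℂ) Q
          = ∑ m, ∑ j, (A m j : ℂ) * (starRingEnd ℂ) (V j) * V m := by
            rw [hQdef, map_sum]
            refine Finset.sum_congr rfl fun m _ => ?_
            rw [hmv2 m]
            simp [map_mul, map_sum, Complex.conj_ofReal, Finset.sum_mul]
        _ = ∑ j, ∑ m, (A m j : ℂ) * (starRingEnd ℂ) (V j) * V m := Finset.sum_comm
        _ = Q := by
            rw [hQdef]
            refine Finset.sum_congr rfl fun m _ => ?_
            rw [hmv2 m, Finset.sum_mul]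
            refine Finset.sum_congr rfl fun j _ => ?_
            rw [hA.apply m j]
            ring
    set w : ℂ := ∑ m, s m * (starRingEnd ℂ) (V m) with hw
    have hwform : w = ((τ / h ^ 2 : ℝ) : ℂ) * Q
        + ∑ m, (lam : ℂ) * (τ : ℂ) * (‖V m‖ : ℂ) ^ 2 * (V m * (starRingEnd ℂ) (V m))
        + ∑ m, ∑ k, (V m * (starRingEnd ℂ) (V m)) * (E m k : ℂ) * (Λ k : ℂ) * (δβ (n + 1) k : ℂ) := by
      rw [hw, hQdef, Finset.mul_sum, ← Finset.sum_add_distrib, ← Finset.sum_add_distrib]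
      refine Finset.sum_congr rfl fun m _ => ?_
      simp only [hsdef]
      simp only [add_mul, Finset.sum_mul]
      congr 1
      · congr 1 <;> ring
      · exact Finset.sum_congr rfl fun k _ => by ring
    have hwreal : (starRingEnd ℂ) w = w := by
      rw [hwform, map_add, map_add, map_mul, Complex.conj_ofReal, hQ]
      congr 1
      · congr 1
        refine (map_sum _ _ _).trans (Finset.sum_congr rfl fun m _ => ?_)
        rw [Complex.mul_conj]
        simp [map_mul, map_pow, Complex.conj_ofReal]
      · refine (map_sum _ _ _).trans (Finset.sum_congr rfl fun m _ => ?_)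
        refine (map_sum _ _ _).trans (Finset.sum_congr rfl fun k _ => ?_)
        rw [mul_comm (V m)]
        simp only [map_mul, Complex.conj_ofReal, Complex.conj_conj]
        ring
    have him : w.im = 0 := by
      have h1 := congrArg Complex.im hwreal
      simp only [Complex.conj_im] at h1
      linarith
    have hT : (∑ m, (a m - b m) * (starRingEnd ℂ) (a m + b m)) = Complex.I * (2 * w) := by
      rw [hw, Finset.mul_sum, Finset.mul_sum]
      refine Finset.sum_congr rfl fun m _ => ?_
      rw [hstep m]
      have h2 : a m + b m = 2 * V m := by rw [hVdef]; ring
      rw [h2, map_mul]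
      simp only [map_ofNat]
      ring
    have hre : (∑ m, (a m - b m) * (starRingEnd ℂ) (a m + b m)).re = 0 := by
      rw [hT]
      simp [Complex.mul_im, him]
    have hexp : ∀ m, ((a m - b m) * (starRingEnd ℂ) (a m + b m)).re
        = ‖a m‖ ^ 2 - ‖b m‖ ^ 2 := by
      intro m
      rw [Complex.sq_norm, Complex.sq_norm]
      simp [Complex.mul_re, Complex.normSq_apply]
      ring
    rw [Complex.re_sum] at hre
    simp only [hexp] at hre
    rw [Finset.sum_sub_distrib] at hre
    linarith
  intro n
  induction n with
  | zero => exact h0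
  | succ n ih => rw [step n, ih]
end

section
/- For any fixed z ∈ ℂ^M with ‖z‖ = 1 and any fixed real vector δβ ∈ ℝ^K, if τ < 1 then there is at most one solution X of the midpoint step equation X - z = i(τ/h²)A (X+z)/2 + iλτ F((X+z)/2)(X+z)/2 + i Z((X+z)/2) δβ among vectors with ‖X‖ = 1. That is, if X and Y are two unit-norm solutions, then ‖X - Y‖² ≤ (τ/2)‖X - Y‖², hence X = Y. -/
lemma nonlin_key' (a b : ℂ) :
    (starRingEnd ℂ) (a-b) * ((a * (starRingEnd ℂ) a) * a - (b * (starRingEnd ℂ) b) * b)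
      = (a * (starRingEnd ℂ) a + b * (starRingEnd ℂ) b)/2 * ((a-b) * (starRingEnd ℂ) (a-b))
        + ((a+b) * (starRingEnd ℂ) (a-b)) * (((a+b) * (starRingEnd ℂ) (a-b))
            + (starRingEnd ℂ) ((a+b) * (starRingEnd ℂ) (a-b)))/4 := by
  simp only [map_sub, map_add, map_mul, Complex.conj_conj]
  ring

lemma nonlin_bound' (a b : ℂ) (ha : ‖a‖ ≤ 1) (hb : ‖b‖ ≤ 1) :
    |((starRingEnd ℂ) (a-b) * ((‖a‖ : ℂ)^2 * a - (‖b‖ : ℂ)^2 * b)).im|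
      ≤ ‖a-b‖ ^ 2 := by
  have h1 : ((‖a‖ : ℂ))^2 = a * (starRingEnd ℂ) a := by
    rw [Complex.mul_conj, Complex.normSq_eq_norm_sq]; push_cast; ring
  have h2 : ((‖b‖ : ℂ))^2 = b * (starRingEnd ℂ) b := by
    rw [Complex.mul_conj, Complex.normSq_eq_norm_sq]; push_cast; ring
  rw [h1, h2, nonlin_key' a b]
  set w : ℂ := (a+b) * (starRingEnd ℂ) (a-b) with hw
  have him : ((a * (starRingEnd ℂ) a + b * (starRingEnd ℂ) b)/2 * ((a-b) * (starRingEnd ℂ) (a-b))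
        + w * (w + (starRingEnd ℂ) w)/4).im = w.im * w.re / 2 := by
    rw [Complex.mul_conj, Complex.mul_conj, Complex.mul_conj, Complex.add_conj]
    push_cast
    simp [Complex.add_im, Complex.mul_im, Complex.div_im]
    ring
  rw [him]
  have hnw : Complex.normSq w ≤ 4 * ‖a-b‖^2 := by
    have habsw : ‖w‖ = ‖a+b‖ * ‖a-b‖ := by
      rw [hw, norm_mul, Complex.norm_conj]
    have hab : ‖a+b‖ ≤ 2 := by
      calc ‖a+b‖ ≤ ‖a‖ + ‖b‖ := norm_add_le a b
        _ ≤ 2 := by linarith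
    have h6 : (2 - ‖a+b‖) * (2 + ‖a+b‖) * (‖a-b‖)^2 ≥ 0 := by
      apply mul_nonneg (mul_nonneg (by linarith) (by positivity)) (by positivity)
    have h7 := Complex.sq_norm w
    rw [habsw] at h7
    nlinarith [h7]
  have hri : |w.im * w.re / 2| ≤ Complex.normSq w / 4 := by
    rw [Complex.normSq_apply]
    rw [abs_div, abs_mul]
    have := sq_nonneg (|w.im| - |w.re|)
    have h3 : |w.im|^2 = w.im^2 := sq_abs _
    have h4 : |w.re|^2 = w.re^2 := sq_abs _
    rw [show |(2:ℝ)| = 2 from abs_two]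
    nlinarith [abs_nonneg w.im, abs_nonneg w.re]
  linarith

lemma re_I_mul' (r : ℝ) (p : ℂ) : (Complex.I * (r:ℂ) * p).re = -(r * p.im) := by
  simp [Complex.mul_re, Complex.mul_im]


/-- Uniqueness for the midpoint step: for fixed `z ∈ ℂ^M` with `‖z‖ = 1`, fixed `δβ ∈ ℝ^K`
and `τ < 1`, any two unit-norm solutions `X, Y` of
`X - z = i(τ/h²)A (X+z)/2 + iλτ F((X+z)/2)(X+z)/2 + i Z((X+z)/2) δβ`
satisfy `‖X - Y‖² ≤ (τ/2)‖X - Y‖²`, hence `X = Y`. -/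
theorem stmt6 (M K : ℕ) (τ h lam : ℝ) (hτ0 : 0 < τ) (hτ : τ < 1) (hh : 0 < h)
    (hlam : lam = 1 ∨ lam = -1)
    (A : Matrix (Fin M) (Fin M) ℝ) (hA : A.IsSymm)
    (E : Matrix (Fin M) (Fin K) ℝ) (Λ : Fin K → ℝ)
    (z : Fin M → ℂ) (hz : ∑ m, ‖z m‖ ^ 2 = 1)
    (δβ : Fin K → ℝ) (X Y : Fin M → ℂ)
    (hX1 : ∑ m, ‖X m‖ ^ 2 = 1) (hY1 : ∑ m, ‖Y m‖ ^ 2 = 1)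
    (hX : ∀ m : Fin M,
      X m - z m
        = Complex.I * ((τ / h ^ 2 : ℝ) : ℂ)
              * ((A.map Complex.ofReal).mulVec (fun j => (X j + z j) / 2) m)
          + Complex.I * (lam : ℂ) * (τ : ℂ)
              * (‖(X m + z m) / 2‖ : ℂ) ^ 2 * ((X m + z m) / 2)
          + Complex.I * ∑ k, ((X m + z m) / 2) * (E m k : ℂ) * (Λ k : ℂ) * (δβ k : ℂ))
    (hY : ∀ m : Fin M,
      Y m - z m
        = Complex.I * ((τ / h ^ 2 : ℝ) : ℂ)
              * ((A.map Complex.ofReal).mulVec (fun j => (Y j + z j) / 2) m)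
          + Complex.I * (lam : ℂ) * (τ : ℂ)
              * (‖(Y m + z m) / 2‖ : ℂ) ^ 2 * ((Y m + z m) / 2)
          + Complex.I * ∑ k, ((Y m + z m) / 2) * (E m k : ℂ) * (Λ k : ℂ) * (δβ k : ℂ)) :
    (∑ m, ‖X m - Y m‖ ^ 2 ≤ (τ / 2) * ∑ m, ‖X m - Y m‖ ^ 2)
      ∧ X = Y := by
  -- unit bounds
  have hXb : ∀ m, ‖X m‖ ≤ 1 := by
    intro m
    have h1 := Finset.single_le_sum (f := fun m => ‖X m‖^2)
      (fun i _ => sq_nonneg _) (Finset.mem_univ m)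
    rw [hX1] at h1
    have h2 : ‖X m‖^2 ≤ 1 := h1
    nlinarith [norm_nonneg (X m)]
  have hYb : ∀ m, ‖Y m‖ ≤ 1 := by
    intro m
    have h1 := Finset.single_le_sum (f := fun m => ‖Y m‖^2)
      (fun i _ => sq_nonneg _) (Finset.mem_univ m)
    rw [hY1] at h1
    have h2 : ‖Y m‖^2 ≤ 1 := h1
    nlinarith [norm_nonneg (Y m)]
  have hzb : ∀ m, ‖z m‖ ≤ 1 := by
    intro m
    have h1 := Finset.single_le_sum (f := fun m => ‖z m‖^2)
      (fun i _ => sq_nonneg _) (Finset.mem_univ m)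
    rw [hz] at h1
    have h2 : ‖z m‖^2 ≤ 1 := h1
    nlinarith [norm_nonneg (z m)]
  have hub : ∀ m, ‖(X m + z m)/2‖ ≤ 1 := by
    intro m
    rw [norm_div]
    have := norm_add_le (X m) (z m)
    have h2 : ‖(2:ℂ)‖ = 2 := Complex.norm_two
    rw [h2]
    have := hXb m; have := hzb m
    linarith
  have hvb : ∀ m, ‖(Y m + z m)/2‖ ≤ 1 := by
    intro m
    rw [norm_div]
    have := norm_add_le (Y m) (z m)
    have h2 : ‖(2:ℂ)‖ = 2 := Complex.norm_two
    rw [h2]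
    have := hYb m; have := hzb m
    linarith
  -- difference equation
  have hDm : ∀ m, X m - Y m
      = Complex.I * ((τ / h ^ 2 : ℝ) : ℂ) * (∑ j, ((A m j : ℝ):ℂ) * ((X j - Y j)/2))
        + Complex.I * (lam : ℂ) * (τ : ℂ)
            * ((‖(X m + z m) / 2‖ : ℂ) ^ 2 * ((X m + z m) / 2)
               - (‖(Y m + z m) / 2‖ : ℂ) ^ 2 * ((Y m + z m) / 2))
        + Complex.I * ((X m - Y m)/2) * ((∑ k, E m k * Λ k * δβ k : ℝ):ℂ) := by
    intro m
    have hA1 : (A.map Complex.ofReal).mulVec (fun j => (X j + z j)/2) m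
        - (A.map Complex.ofReal).mulVec (fun j => (Y j + z j)/2) m
        = ∑ j, ((A m j : ℝ):ℂ) * ((X j - Y j)/2) := by
      simp only [Matrix.mulVec, dotProduct, Matrix.map_apply]
      rw [← Finset.sum_sub_distrib]
      exact Finset.sum_congr rfl fun j _ => by ring
    have hC1 : (∑ k, ((X m + z m)/2) * (E m k:ℂ) * (Λ k:ℂ) * (δβ k:ℂ))
        - (∑ k, ((Y m + z m)/2) * (E m k:ℂ) * (Λ k:ℂ) * (δβ k:ℂ))
        = ((X m - Y m)/2) * ((∑ k, E m k * Λ k * δβ k : ℝ):ℂ) := by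
      push_cast
      rw [← Finset.sum_sub_distrib, Finset.mul_sum]
      exact Finset.sum_congr rfl fun k _ => by ring
    linear_combination (hX m) - (hY m) + Complex.I * ((τ/h^2:ℝ):ℂ) * hA1 + Complex.I * hC1
  -- splitting of |D m|²
  have hsplit : ∀ m, (starRingEnd ℂ) (X m - Y m) * (X m - Y m)
      = (starRingEnd ℂ) (X m - Y m)
          * (Complex.I * ((τ / h ^ 2 : ℝ) : ℂ) * (∑ j, ((A m j : ℝ):ℂ) * ((X j - Y j)/2)))
        + (starRingEnd ℂ) (X m - Y m)
          * (Complex.I * (lam : ℂ) * (τ : ℂ)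
            * ((‖(X m + z m) / 2‖ : ℂ) ^ 2 * ((X m + z m) / 2)
               - (‖(Y m + z m) / 2‖ : ℂ) ^ 2 * ((Y m + z m) / 2)))
        + (starRingEnd ℂ) (X m - Y m)
          * (Complex.I * ((X m - Y m)/2) * ((∑ k, E m k * Λ k * δβ k : ℝ):ℂ)) := by
    intro m
    nth_rewrite 2 [hDm m]
    ring
  -- term 1 vanishes
  have hT1 : (∑ m, (starRingEnd ℂ) (X m - Y m)
      * (Complex.I * ((τ / h ^ 2 : ℝ) : ℂ) * (∑ j, ((A m j : ℝ):ℂ) * ((X j - Y j)/2)))).re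
      = 0 := by
    have hsum : (∑ m, (starRingEnd ℂ) (X m - Y m)
        * (Complex.I * ((τ / h ^ 2 : ℝ) : ℂ) * (∑ j, ((A m j : ℝ):ℂ) * ((X j - Y j)/2))))
        = Complex.I * ((τ / h ^ 2 : ℝ) : ℂ)
          * (∑ m, ∑ j, ((A m j : ℝ):ℂ) * ((starRingEnd ℂ) (X m - Y m) * ((X j - Y j)/2))) := by
      simp only [Finset.mul_sum]
      exact Finset.sum_congr rfl fun m _ => Finset.sum_congr rfl fun j _ => by ring
    have hQim : (∑ m, ∑ j, ((A m j : ℝ):ℂ)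
        * ((starRingEnd ℂ) (X m - Y m) * ((X j - Y j)/2))).im = 0 := by
      have hc : (starRingEnd ℂ) (∑ m, ∑ j, ((A m j : ℝ):ℂ)
          * ((starRingEnd ℂ) (X m - Y m) * ((X j - Y j)/2)))
          = ∑ m, ∑ j, ((A m j : ℝ):ℂ)
          * ((starRingEnd ℂ) (X m - Y m) * ((X j - Y j)/2)) := by
        simp only [map_sum, map_mul, map_div₀, Complex.conj_conj, Complex.conj_ofReal,
          map_ofNat]
        rw [Finset.sum_comm]
        refine Finset.sum_congr rfl fun x _ => Finset.sum_congr rfl fun y _ => ?_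
        rw [show A y x = A x y from hA.apply x y]
        ring
      exact Complex.conj_eq_iff_im.mp hc
    rw [hsum, re_I_mul', hQim, mul_zero, neg_zero]
  -- term 3 vanishes pointwise
  have hT3 : ∀ m, ((starRingEnd ℂ) (X m - Y m)
      * (Complex.I * ((X m - Y m)/2) * ((∑ k, E m k * Λ k * δβ k : ℝ):ℂ))).re = 0 := by
    intro m
    have e : (starRingEnd ℂ) (X m - Y m)
        * (Complex.I * ((X m - Y m)/2) * ((∑ k, E m k * Λ k * δβ k : ℝ):ℂ))
        = Complex.I * ((∑ k, E m k * Λ k * δβ k : ℝ):ℂ) / 2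
          * ((X m - Y m) * (starRingEnd ℂ) (X m - Y m)) := by ring
    rw [e, Complex.mul_conj]
    rw [show Complex.I * ((∑ k, E m k * Λ k * δβ k : ℝ):ℂ) / 2 * (Complex.normSq (X m - Y m) : ℂ)
      = Complex.I * (((∑ k, E m k * Λ k * δβ k : ℝ)) : ℂ) * ((Complex.normSq (X m - Y m) / 2 : ℝ) : ℂ)
      from by push_cast; ring]
    rw [re_I_mul']
    simp
  -- term 2 bounded pointwise
  have hT2 : ∀ m, ((starRingEnd ℂ) (X m - Y m)
      * (Complex.I * (lam : ℂ) * (τ : ℂ)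
        * ((‖(X m + z m) / 2‖ : ℂ) ^ 2 * ((X m + z m) / 2)
           - (‖(Y m + z m) / 2‖ : ℂ) ^ 2 * ((Y m + z m) / 2)))).re
      ≤ τ / 2 * ‖X m - Y m‖ ^ 2 := by
    intro m
    obtain ⟨a, ha⟩ : ∃ a : ℂ, (X m + z m)/2 = a := ⟨_, rfl⟩
    obtain ⟨b, hb⟩ : ∃ b : ℂ, (Y m + z m)/2 = b := ⟨_, rfl⟩
    rw [ha, hb]
    have hab : X m - Y m = 2 * (a - b) := by rw [← ha, ← hb]; ring
    have e : (starRingEnd ℂ) (X m - Y m)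
        * (Complex.I * (lam : ℂ) * (τ : ℂ)
          * ((‖a‖ : ℂ) ^ 2 * a - (‖b‖ : ℂ) ^ 2 * b))
        = Complex.I * ((2 * lam * τ : ℝ) : ℂ)
          * ((starRingEnd ℂ) (a - b)
            * ((‖a‖ : ℂ) ^ 2 * a - (‖b‖ : ℂ) ^ 2 * b)) := by
      have hc : (starRingEnd ℂ) (X m - Y m) = 2 * (starRingEnd ℂ) (a - b) := by
        rw [hab, map_mul, map_ofNat]
      rw [hc]
      push_cast
      ring
    rw [e, re_I_mul']
    have hbd := nonlin_bound' a b (ha ▸ hub m) (hb ▸ hvb m)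
    have habs : ‖X m - Y m‖ = 2 * ‖a - b‖ := by
      rw [hab, norm_mul, Complex.norm_two]
    rw [habs]
    have hlam1 : |lam| = 1 := by rcases hlam with h1 | h1 <;> simp [h1]
    set p := ((starRingEnd ℂ) (a - b)
      * ((‖a‖ : ℂ) ^ 2 * a - (‖b‖ : ℂ) ^ 2 * b)).im
    have h8 : -(2 * lam * τ * p) ≤ 2 * τ * |p| := by
      have : |2 * lam * τ * p| = 2 * τ * |p| := by
        rw [abs_mul, abs_mul, abs_mul, hlam1, abs_of_pos hτ0]
        norm_num
      have := neg_abs_le (2 * lam * τ * p)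
      linarith
    calc -(2 * lam * τ * p) ≤ 2 * τ * |p| := h8
      _ ≤ 2 * τ * ‖a - b‖^2 := by
          have := abs_nonneg p
          nlinarith
      _ = τ / 2 * (2 * ‖a - b‖)^2 := by ring
  -- assemble
  have hre : ∀ m, ‖X m - Y m‖ ^ 2
      = ((starRingEnd ℂ) (X m - Y m) * (X m - Y m)).re := by
    intro m
    rw [mul_comm, Complex.mul_conj, Complex.ofReal_re, Complex.sq_norm]
  have hkey : ∑ m, ‖X m - Y m‖ ^ 2
      ≤ (τ / 2) * ∑ m, ‖X m - Y m‖ ^ 2 := by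
    calc ∑ m, ‖X m - Y m‖ ^ 2
        = ∑ m, ((starRingEnd ℂ) (X m - Y m) * (X m - Y m)).re :=
          Finset.sum_congr rfl fun m _ => hre m
      _ = ∑ m, (((starRingEnd ℂ) (X m - Y m)
            * (Complex.I * ((τ / h ^ 2 : ℝ) : ℂ) * (∑ j, ((A m j : ℝ):ℂ) * ((X j - Y j)/2)))).re
          + ((starRingEnd ℂ) (X m - Y m)
            * (Complex.I * (lam : ℂ) * (τ : ℂ)
              * ((‖(X m + z m) / 2‖ : ℂ) ^ 2 * ((X m + z m) / 2)
                 - (‖(Y m + z m) / 2‖ : ℂ) ^ 2 * ((Y m + z m) / 2)))).re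
          + ((starRingEnd ℂ) (X m - Y m)
            * (Complex.I * ((X m - Y m)/2) * ((∑ k, E m k * Λ k * δβ k : ℝ):ℂ))).re) := by
          refine Finset.sum_congr rfl fun m _ => ?_
          rw [hsplit m]
          simp [Complex.add_re]
      _ ≤ ∑ m, ((starRingEnd ℂ) (X m - Y m)
            * (Complex.I * ((τ / h ^ 2 : ℝ) : ℂ) * (∑ j, ((A m j : ℝ):ℂ) * ((X j - Y j)/2)))).re
          + ∑ m, (τ / 2 * ‖X m - Y m‖ ^ 2)
          + ∑ m, (0:ℝ) := by
          rw [Finset.sum_add_distrib, Finset.sum_add_distrib]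
          have g1 := Finset.sum_le_sum (fun m (_ : m ∈ Finset.univ) => hT2 m)
          have g2 : (∑ m, ((starRingEnd ℂ) (X m - Y m)
              * (Complex.I * ((X m - Y m)/2) * ((∑ k, E m k * Λ k * δβ k : ℝ):ℂ))).re)
              = ∑ m : Fin M, (0:ℝ) := Finset.sum_congr rfl fun m _ => hT3 m
          exact add_le_add (add_le_add le_rfl g1) (le_of_eq g2)
      _ = (∑ m, (starRingEnd ℂ) (X m - Y m)
            * (Complex.I * ((τ / h ^ 2 : ℝ) : ℂ) * (∑ j, ((A m j : ℝ):ℂ) * ((X j - Y j)/2)))).re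
          + ∑ m, (τ / 2 * ‖X m - Y m‖ ^ 2) := by
          rw [← Complex.re_sum]
          simp
      _ = (τ / 2) * ∑ m, ‖X m - Y m‖ ^ 2 := by
          rw [hT1, Finset.mul_sum]
          simp
  refine ⟨hkey, ?_⟩
  have hS0 : ∑ m, ‖X m - Y m‖ ^ 2 = 0 := by
    have hnn : (0:ℝ) ≤ ∑ m, ‖X m - Y m‖ ^ 2 :=
      Finset.sum_nonneg fun m _ => sq_nonneg _
    nlinarith
  have hall := (Finset.sum_eq_zero_iff_of_nonneg (fun m _ => sq_nonneg (‖X m - Y m‖))).mp hS0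
  funext m
  have := hall m (Finset.mem_univ m)
  have : ‖X m - Y m‖ = 0 := by nlinarith [norm_nonneg (X m - Y m)]
  have := norm_eq_zero.mp this
  exact sub_eq_zero.mp this
end

section
/- For X, Y, z ∈ ℂ^M componentwise define H_m = |X_m+z_m|²(X_m+z_m) - |Y_m+z_m|²(Y_m+z_m). Then Im(Σ_m conj(X_m - Y_m) H_m) = Im(Σ_m (X_m+z_m)(Y_m+z_m)(conj(X_m) - conj(Y_m))²), and consequently |Im(Σ_m conj(X_m-Y_m) H_m)| ≤ (max_m |X_m+z_m||Y_m+z_m|) · Σ_m |X_m - Y_m|². -/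
lemma term_im (a b : ℂ) :
    (starRingEnd ℂ (a - b) * ((‖a‖ : ℂ) ^ 2 * a - (‖b‖ : ℂ) ^ 2 * b)).im
      = (a * b * (starRingEnd ℂ a - starRingEnd ℂ b) ^ 2).im := by
  have ha : (‖a‖ : ℂ) ^ 2 = a * starRingEnd ℂ a := by
    rw [← Complex.ofReal_pow, Complex.sq_norm, Complex.mul_conj]
  have hb : (‖b‖ : ℂ) ^ 2 = b * starRingEnd ℂ b := by
    rw [← Complex.ofReal_pow, Complex.sq_norm, Complex.mul_conj]
  have key : starRingEnd ℂ (a - b) * ((‖a‖ : ℂ) ^ 2 * a - (‖b‖ : ℂ) ^ 2 * b)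
      = ((Complex.normSq a + Complex.normSq b : ℝ) : ℂ) * ((Complex.normSq (a - b) : ℝ) : ℂ)
        + a * b * (starRingEnd ℂ a - starRingEnd ℂ b) ^ 2 := by
    rw [ha, hb]
    push_cast
    rw [← Complex.mul_conj, ← Complex.mul_conj, ← Complex.mul_conj]
    simp only [map_sub]
    ring
  rw [key]
  simp [Complex.add_im, Complex.mul_im]

/-- With `H_m = |X_m+z_m|²(X_m+z_m) - |Y_m+z_m|²(Y_m+z_m)`, one has
`Im ∑ₘ conj(X_m-Y_m) H_m = Im ∑ₘ (X_m+z_m)(Y_m+z_m)(conj X_m - conj Y_m)²`, and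
consequently `|Im ∑ₘ conj(X_m-Y_m) H_m| ≤ (maxₘ |X_m+z_m||Y_m+z_m|) ∑ₘ |X_m-Y_m|²`. -/
theorem stmt7 (M : ℕ) (hM : 0 < M) (X Y z : Fin M → ℂ) :
    (∑ m, starRingEnd ℂ (X m - Y m) *
        ((‖X m + z m‖ : ℂ) ^ 2 * (X m + z m)
          - (‖Y m + z m‖ : ℂ) ^ 2 * (Y m + z m))).im
      = (∑ m, (X m + z m) * (Y m + z m)
          * (starRingEnd ℂ (X m) - starRingEnd ℂ (Y m)) ^ 2).im
    ∧ |(∑ m, starRingEnd ℂ (X m - Y m) *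
        ((‖X m + z m‖ : ℂ) ^ 2 * (X m + z m)
          - (‖Y m + z m‖ : ℂ) ^ 2 * (Y m + z m))).im|
      ≤ (⨆ m : Fin M, ‖X m + z m‖ * ‖Y m + z m‖)
          * ∑ m, ‖X m - Y m‖ ^ 2 := by
  have h1 : (∑ m, starRingEnd ℂ (X m - Y m) *
        ((‖X m + z m‖ : ℂ) ^ 2 * (X m + z m)
          - (‖Y m + z m‖ : ℂ) ^ 2 * (Y m + z m))).im
      = (∑ m, (X m + z m) * (Y m + z m)
          * (starRingEnd ℂ (X m) - starRingEnd ℂ (Y m)) ^ 2).im := by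
    rw [Complex.im_sum, Complex.im_sum]
    refine Finset.sum_congr rfl fun m _ => ?_
    have e1 : X m - Y m = (X m + z m) - (Y m + z m) := by ring
    have e2 : starRingEnd ℂ (X m) - starRingEnd ℂ (Y m)
        = starRingEnd ℂ (X m + z m) - starRingEnd ℂ (Y m + z m) := by
      simp only [map_add]; ring
    rw [e1, e2]
    exact term_im _ _
  refine ⟨h1, ?_⟩
  rw [h1]
  set S := ⨆ m : Fin M, ‖X m + z m‖ * ‖Y m + z m‖ with hS
  have hSle : ∀ m, ‖X m + z m‖ * ‖Y m + z m‖ ≤ S :=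
    fun m => le_ciSup (Set.Finite.bddAbove (Set.finite_range fun m => ‖X m + z m‖ * ‖Y m + z m‖)) m
  calc |(∑ m, (X m + z m) * (Y m + z m)
          * (starRingEnd ℂ (X m) - starRingEnd ℂ (Y m)) ^ 2).im|
      ≤ ∑ m, |((X m + z m) * (Y m + z m)
          * (starRingEnd ℂ (X m) - starRingEnd ℂ (Y m)) ^ 2).im| := by
        rw [Complex.im_sum]; exact Finset.abs_sum_le_sum_abs _ _
    _ ≤ ∑ m, S * ‖X m - Y m‖ ^ 2 := by
        refine Finset.sum_le_sum fun m _ => ?_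
        have h2 : |((X m + z m) * (Y m + z m)
            * (starRingEnd ℂ (X m) - starRingEnd ℂ (Y m)) ^ 2).im|
            ≤ ‖(X m + z m) * (Y m + z m)
              * (starRingEnd ℂ (X m) - starRingEnd ℂ (Y m)) ^ 2‖ :=
          Complex.abs_im_le_norm _
        have h3 : ‖(X m + z m) * (Y m + z m)
              * (starRingEnd ℂ (X m) - starRingEnd ℂ (Y m)) ^ 2‖
            = ‖X m + z m‖ * ‖Y m + z m‖
              * ‖X m - Y m‖ ^ 2 := by
          rw [norm_mul, norm_mul, norm_pow, ← map_sub, Complex.norm_conj]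
        refine h2.trans ?_
        rw [h3]
        exact mul_le_mul_of_nonneg_right (hSle m) (by positivity)
    _ = S * ∑ m, ‖X m - Y m‖ ^ 2 := by rw [Finset.mul_sum]
end
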